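/- Let p and q be positive integers. For any two search trees T1 and T2 on the complete bipartite graph K_{p,q}, dist(T1, T2) ≤ 2pq. -/

import Mathlib

open SimpleGraph

/-- A search tree (elimination tree) on a graph `G`, encoded by its ancestor
relation: `anc u v` means that `u` is an ancestor of `v` (possibly `u = v`).
Equivalently (for connected `G`): the root is a vertex `r`, joined to the roots
of search trees on each connected component of `G - r`. -/
structure SearchTree {V : Type} (G : SimpleGraph V) : Type where
  anc : V → V → Prop
  refl : ∀ v, anc v v
  antisymm : ∀ u v, anc u v → anc v u → u = v
  trans : ∀ u v w, anc u v → anc v w → anc u w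
  chain : ∀ u v w, anc u w → anc v w → anc u v ∨ anc v u
  root : ∃ r, ∀ v, anc r v
  edge_comparable : ∀ u v, G.Adj u v → anc u v ∨ anc v u
  desc_connected : ∀ v, (G.induce {u | anc v u}).Connected

namespace SearchTree

/-- The set of descendants of `v` (including `v`): the vertex set of the
subtree rooted at `v`. -/
def descSet {V : Type} {G : SimpleGraph V} (T : SearchTree G) (v : V) : Set V :=
  {u | T.anc v u}

/-- The height of a search tree: the maximal number of vertices on a
root-to-leaf path (a single-vertex tree has height 1). -/
noncomputable def height {V : Type} [Fintype V] {G : SimpleGraph V} (T : SearchTree G) : ℕ :=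
  Finset.univ.sup fun v => Set.ncard {u | T.anc u v}

end SearchTree

/-- `T'` is obtained from `T` by a rotation at a vertex `b` with parent `a`:
the subtree of `T` rooted at `a` (with vertex set `A`) becomes rooted at `b`,
`a` becomes the root of the component of `G[A] - b` containing `a`, and all
other subtrees are unchanged. The rotation is said to involve `a` and `b`. -/
def IsRotation {V : Type} {G : SimpleGraph V} (T T' : SearchTree G) (a b : V) : Prop :=
  a ≠ b ∧ T.anc a b ∧ T'.descSet b = T.descSet a ∧
    ∀ v, v ≠ a → v ≠ b → T'.descSet v = T.descSet v

/-- The rotation graph of `G`: vertices are the search trees on `G`, two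
trees being adjacent when they differ by a single rotation. It is the skeleton
of the graph associahedron `A(G)`; its diameter is `δ(A(G))`. -/
def rotationGraph {V : Type} (G : SimpleGraph V) : SimpleGraph (SearchTree G) where
  Adj T T' := ∃ a b, IsRotation T T' a b
  symm := by
    constructor
    rintro T T' ⟨a, b, hne, hanc, hb, hoth⟩
    have hanc' : T'.anc b a := by
      have ha : a ∈ T'.descSet b := by rw [hb]; exact T.refl a
      exact ha
    exact ⟨b, a, hne.symm, hanc', hb.symm, fun v h1 h2 => (hoth v h2 h1).symm⟩
  loopless := by
    constructor
    rintro T ⟨a, b, hne, hanc, hb, hoth⟩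
    have h : T.anc b a := by
      have ha : a ∈ T.descSet b := by rw [hb]; exact T.refl a
      exact ha
    exact hne (T.antisymm a b hanc h)

/-- The tree-depth of `G`: the smallest height of a search tree on `G`. -/
noncomputable def treeDepth {V : Type} [Fintype V] (G : SimpleGraph V) : ℕ :=
  sInf {h | ∃ T : SearchTree G, T.height = h}

/-- Adding a universal vertex to a graph. -/
def addUniversal {V : Type} (G : SimpleGraph V) : SimpleGraph (Option V) where
  Adj x y := match x, y with
    | none, none => False
    | none, some _ => True
    | some _, none => True
    | some a, some b => G.Adj a b
  symm := by
    constructor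
    rintro (_ | a) (_ | b) h
    · exact h.elim
    · trivial
    · trivial
    · exact G.symm.symm _ _ h
  loopless := by
    constructor
    rintro (_ | a) h
    · exact h
    · exact G.loopless.irrefl a h

/-- Disjoint union of two graphs. -/
def disjUnion {V W : Type} (G : SimpleGraph V) (H : SimpleGraph W) : SimpleGraph (V ⊕ W) where
  Adj x y := match x, y with
    | .inl a, .inl b => G.Adj a b
    | .inr a, .inr b => H.Adj a b
    | _, _ => False
  symm := by
    constructor
    rintro (a | a) (b | b) h
    · exact G.symm.symm _ _ h
    · exact h.elim
    · exact h.elim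
    · exact H.symm.symm _ _ h
  loopless := by
    constructor
    rintro (a | a) h
    · exact G.loopless.irrefl a h
    · exact H.loopless.irrefl a h

/-- Graphs built recursively from single vertices by adding universal vertices
and taking disjoint unions. -/
inductive TPBuild : {V : Type} → SimpleGraph V → Prop
  | single : TPBuild (⊥ : SimpleGraph PUnit)
  | addUniv {V : Type} {G : SimpleGraph V} : TPBuild G → TPBuild (addUniversal G)
  | union {V W : Type} {G : SimpleGraph V} {H : SimpleGraph W} :
      TPBuild G → TPBuild H → TPBuild (disjUnion G H)

/-- A graph is trivially perfect if it can be built recursively from single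
vertices by repeatedly adding universal vertices and taking disjoint unions. -/
def TriviallyPerfect {V : Type} (G : SimpleGraph V) : Prop :=
  ∃ (W : Type) (H : SimpleGraph W), TPBuild H ∧ Nonempty (G ≃g H)

/-- A graph is chordal if it has no induced cycle of length at least 4. -/
def Chordal {V : Type} (G : SimpleGraph V) : Prop :=
  ∀ n, 4 ≤ n → IsEmpty (cycleGraph n ↪g G)

/-- The treewidth of `G`: one less than the smallest clique number of a chordal
supergraph of `G` on the same vertex set. -/
noncomputable def treewidth {V : Type} (G : SimpleGraph V) : ℕ :=
  sInf {k | ∃ H : SimpleGraph V, G ≤ H ∧ Chordal H ∧ H.cliqueNum = k + 1}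

/-- An interval graph: the intersection graph of closed intervals on the real line. -/
def IsIntervalGraph {V : Type} (G : SimpleGraph V) : Prop :=
  ∃ lo hi : V → ℝ, (∀ v, lo v ≤ hi v) ∧
    ∀ u v, G.Adj u v ↔ u ≠ v ∧ lo u ≤ hi v ∧ lo v ≤ hi u

/-- The pathwidth of `G`: one less than the smallest clique number of an
interval supergraph of `G` on the same vertex set. -/
noncomputable def pathwidth {V : Type} (G : SimpleGraph V) : ℕ :=
  sInf {k | ∃ H : SimpleGraph V, G ≤ H ∧ IsIntervalGraph H ∧ H.cliqueNum = k + 1}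

/-- A vertex is simplicial if its neighborhood induces a clique. -/
def Simplicial {V : Type} (G : SimpleGraph V) (v : V) : Prop :=
  G.IsClique (G.neighborSet v)

/-- A set of vertices is (monophonically) convex if it can be obtained from the
full vertex set by iteratively deleting a simplicial vertex of the current
induced subgraph. -/
inductive MConvex {V : Type} (G : SimpleGraph V) : Set V → Prop
  | univ : MConvex G Set.univ
  | delete {S : Set V} {v : V} (hS : MConvex G S) (hv : v ∈ S)
      (hsimp : Simplicial (G.induce S) ⟨v, hv⟩) : MConvex G (S \ {v})

/-- `P` is the projection of the search tree `T` on the convex set `S`: the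
search tree on `G[S]` obtained from `T` by iteratively deleting the vertices
outside `S`; its ancestor relation is the restriction of that of `T`. -/
def IsProjection {V : Type} {G : SimpleGraph V} (S : Set V) (T : SearchTree G)
    (P : SearchTree (G.induce S)) : Prop :=
  ∀ u v : S, P.anc u v ↔ T.anc (↑u) (↑v)

/-- The complete split graph `SPK p q`: a clique `P` of `p` vertices, an
independent set `Q` of `q` vertices, and all edges between `P` and `Q`. -/
def SPK (p q : ℕ) : SimpleGraph (Fin p ⊕ Fin q) where
  Adj x y := x ≠ y ∧ (x.isLeft ∨ y.isLeft)
  symm := by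
    constructor
    rintro x y ⟨h1, h2⟩
    exact ⟨h1.symm, h2.symm⟩
  loopless := by
    constructor
    rintro x ⟨h, _⟩
    exact h rfl

/-!
A search tree on `K_{p,q}` is a path, its spine of inner vertices, with all other vertices as
leaves below the last spine vertex; the leaves form a nonempty set whose color is opposite to that
of the last spine vertex. For a color `c`, count the pairs `(v, w)` where `w` has color `c`, `v` has
the other color and `v` is an ancestor of `w`. As long as some spine vertex has the color `!c`, one
of four rotations at the lowest such vertex decreases this count, so every tree `T` is within
`inv_c T` rotations of a tree whose spine consists exactly of the vertices of color `c`. A tree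
with spine of color `c` and one with spine of color `!c` are at most `pq` rotations apart: the
vertices of color `!c` are inserted one by one above the block of color `c`, each at the cost of
the length of that block. Hence `dist(T₁, T₂) ≤ inv_c T₁ + pq + inv_{!c} T₂` for both colors `c`.
As two vertices of different colors are comparable, `inv_c T + inv_{!c} T = pq`, so the two bounds
add up to `4pq`.
-/

theorem SearchTree.ext_anc {V : Type} {G : SimpleGraph V} {T T' : SearchTree G}
    (h : T.anc = T'.anc) : T = T' := by
  cases T; cases T'; subst h; rfl

def SearchTree.IsLeaf {V : Type} {G : SimpleGraph V} (T : SearchTree G) (v : V) : Prop :=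
  ∀ w, T.anc v w → w = v

namespace Spine

open List

section Validity

variable {V : Type} {G : SimpleGraph V} {s : V → Bool} {L A B : List V} {u v w x y z : V}

theorem exists_eq_append_cons_of_exists {p : V → Prop} (hL : ∃ u ∈ L, ¬ p u) :
    ∃ A u X, L = A ++ u :: X ∧ ¬ p u ∧ ∀ x ∈ X, p x := by
  induction L with
  | nil => simp at hL
  | cons y L ih =>
    by_cases h : ∃ u ∈ L, ¬ p u
    · obtain ⟨A, u, X, rfl, hu, hX⟩ := ih h
      exact ⟨y :: A, u, X, rfl, hu, hX⟩
    · push Not at h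
      refine ⟨[], y, L, rfl, fun hy => ?_, h⟩
      obtain ⟨u, hu, hpu⟩ := hL
      rcases mem_cons.1 hu with rfl | hu
      exacts [hpu hy, hpu (h u hu)]

theorem notMem_of_nodup_append_cons (h : (A ++ v :: B).Nodup) : v ∉ A :=
  fun hv => (nodup_cons.1 (nodup_middle.1 h)).1 (mem_append_left B hv)

theorem connected_induce_of_color_ne (hG : ∀ u v, G.Adj u v ↔ s u ≠ s v) {S : Set V} {a b : V}
    (ha : a ∈ S) (hb : b ∈ S) (hab : s a ≠ s b) : (G.induce S).Connected := by
  have : Nonempty S := ⟨⟨a, ha⟩⟩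
  refine ⟨fun x y => ?_⟩
  by_cases hxy : s x = s y
  · -- a vertex of `S` of the other color is adjacent to both
    obtain ⟨c, hc, hcx⟩ : ∃ c ∈ S, s c ≠ s x := by
      by_cases hax : s a = s x
      · exact ⟨b, hb, fun h => hab (hax.trans h.symm)⟩
      · exact ⟨a, ha, hax⟩
    have h₁ : (G.induce S).Adj x ⟨c, hc⟩ := (hG _ _).2 (Ne.symm hcx)
    have h₂ : (G.induce S).Adj ⟨c, hc⟩ y := (hG _ _).2 (hxy ▸ hcx)
    exact h₁.reachable.trans h₂.reachable
  · have h : (G.induce S).Adj x y := (hG _ _).2 hxy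
    exact h.reachable

/-- `L` lists the inner vertices of a search tree from the root down; the vertices off `L` are
its leaves, a nonempty set of the color opposite to that of the last vertex of `L`. -/
structure IsSpine (s : V → Bool) (L : List V) : Prop where
  nodup : L.Nodup
  exists_notMem : ∃ w, w ∉ L
  exists_getLast : ∃ z ∈ L.getLast?, ∀ w ∉ L, s w ≠ s z

theorem isSpine_append_singleton :
    IsSpine s (A ++ [z]) ↔ (A ++ [z]).Nodup ∧ (∃ w, w ∉ A ++ [z]) ∧ ∀ w ∉ A ++ [z], s w ≠ s z :=
  ⟨fun ⟨h₁, h₂, h₃⟩ => ⟨h₁, h₂, by simpa using h₃⟩, fun ⟨h₁, h₂, h₃⟩ => ⟨h₁, h₂, by simpa using h₃⟩⟩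

theorem IsSpine.exists_eq_append (h : IsSpine s L) :
    ∃ A z, L = A ++ [z] ∧ ∀ w ∉ L, s w ≠ s z := by
  obtain ⟨z, hz, hc⟩ := h.exists_getLast
  obtain ⟨A, rfl⟩ := List.getLast?_eq_some_iff.1 hz
  exact ⟨A, z, rfl, hc⟩

theorem IsSpine.ne_nil (h : IsSpine s L) : L ≠ [] := by
  obtain ⟨A, z, rfl, -⟩ := h.exists_eq_append
  simp

theorem IsSpine.color_eq_of_notMem (h : IsSpine s L) (hu : u ∉ L) (hv : v ∉ L) : s u = s v := by
  obtain ⟨A, z, rfl, hc⟩ := h.exists_eq_append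
  rw [Bool.eq_not_iff.2 (hc u hu), Bool.eq_not_iff.2 (hc v hv)]

theorem IsSpine.swap (h : IsSpine s (A ++ u :: x :: B)) (hB : B ≠ []) :
    IsSpine s (A ++ x :: u :: B) := by
  have hperm : A ++ x :: u :: B ~ A ++ u :: x :: B := (Perm.swap u x B).append_left A
  have hlast (a b : V) : (A ++ a :: b :: B).getLast? = B.getLast? := by
    rw [getLast?_append_of_ne_nil _ (by simp), getLast?_cons_cons, getLast?_cons_of_ne_nil hB]
  obtain ⟨w, hw⟩ := h.exists_notMem
  obtain ⟨z, hz, hc⟩ := h.exists_getLast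
  exact ⟨hperm.nodup_iff.2 h.nodup, ⟨w, mt hperm.mem_iff.1 hw⟩,
    ⟨z, by rwa [hlast] at hz ⊢, fun v hv => hc v (mt hperm.mem_iff.2 hv)⟩⟩

theorem IsSpine.demote (h : IsSpine s (A ++ [u, x])) (hux : s u ≠ s x) : IsSpine s (A ++ [x]) := by
  rw [show A ++ [u, x] = A ++ [u] ++ [x] by simp, isSpine_append_singleton] at h
  obtain ⟨hnd, -, hc⟩ := h
  refine isSpine_append_singleton.2
    ⟨hnd.sublist (by simp), ⟨u, by grind [nodup_append]⟩, fun w hw => ?_⟩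
  by_cases hwu : w = u
  · exact hwu ▸ hux
  · exact hc w (by grind)

theorem IsSpine.promote (h : IsSpine s (A ++ [u])) (hx : x ∉ A ++ [u]) (hy : y ∉ A ++ [u])
    (hxy : x ≠ y) : IsSpine s (A ++ [x, u]) := by
  obtain ⟨hnd, -, hc⟩ := isSpine_append_singleton.1 h
  rw [show A ++ [x, u] = A ++ [x] ++ [u] by simp, isSpine_append_singleton]
  exact ⟨by grind [nodup_append], ⟨y, by grind⟩, fun w hw => hc w (by grind)⟩

theorem IsSpine.exchange (h : IsSpine s (A ++ [u])) (hx : ∀ w, w ∉ A ++ [u] ↔ w = x) :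
    IsSpine s (A ++ [x]) := by
  obtain ⟨hnd, -, hc⟩ := isSpine_append_singleton.1 h
  have hxL := (hx x).2 rfl
  refine isSpine_append_singleton.2
    ⟨by grind [nodup_append], ⟨u, by grind [nodup_append]⟩, fun w hw => ?_⟩
  have hwu : w = u := by have := hx w; grind
  exact hwu ▸ (hc x hxL).symm

theorem IsSpine.mem_iff_of_forall {c : Bool} (h : IsSpine s L) (hL : ∀ v ∈ L, s v = c) (v : V) :
    v ∈ L ↔ s v = c := by
  refine ⟨hL v, fun hv => by_contra fun hvL => ?_⟩
  obtain ⟨A, z, rfl, hc⟩ := h.exists_eq_append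
  exact hc v hvL (hv.trans (hL z (by simp)).symm)

end Validity

section Leaves

variable {V : Type} {G : SimpleGraph V} {s : V → Bool} {T : SearchTree G} {u v : V}

theorem exists_anc_color_ne (hG : ∀ u v, G.Adj u v ↔ s u ≠ s v) (hv : ¬T.IsLeaf v) :
    ∃ a, T.anc v a ∧ s a ≠ s v := by
  simp only [SearchTree.IsLeaf, not_forall] at hv
  obtain ⟨w, hw, hwv⟩ := hv
  obtain ⟨p⟩ := (T.desc_connected v).preconnected ⟨v, T.refl v⟩ ⟨w, hw⟩
  cases p with
  | nil => exact absurd rfl hwv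
  | @cons _ a _ hadj _ => exact ⟨a, a.2, fun h => (hG v a).1 hadj h.symm⟩

/-- An inner vertex has descendants of both colors, and one of them is adjacent to `v`. -/
theorem anc_total_of_not_isLeaf (hG : ∀ u v, G.Adj u v ↔ s u ≠ s v) (hu : ¬T.IsLeaf u) (v : V) :
    T.anc u v ∨ T.anc v u := by
  obtain ⟨a, ha, hau⟩ := exists_anc_color_ne hG hu
  obtain ⟨x, hx, hxv⟩ : ∃ x, T.anc u x ∧ s x ≠ s v := by
    by_cases h : s u = s v
    · exact ⟨a, ha, h ▸ hau⟩
    · exact ⟨u, T.refl u, h⟩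
  rcases T.edge_comparable x v ((hG x v).2 hxv) with h | h
  · exact Or.inl (T.trans _ _ _ hx h)
  · exact T.chain u v x hx h

theorem anc_of_isLeaf (hG : ∀ u v, G.Adj u v ↔ s u ≠ s v) (hu : ¬T.IsLeaf u) (hv : T.IsLeaf v) :
    T.anc u v :=
  (anc_total_of_not_isLeaf hG hu v).resolve_right fun h => hu (hv u h ▸ hv)

theorem color_eq_of_isLeaf (hG : ∀ u v, G.Adj u v ↔ s u ≠ s v) (hu : T.IsLeaf u)
    (hv : T.IsLeaf v) : s u = s v := by
  by_contra h
  rcases T.edge_comparable u v ((hG u v).2 h) with h' | h'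
  · exact h (hu v h' ▸ rfl)
  · exact h (hv u h' ▸ rfl)

variable [Fintype V]

theorem ncard_anc_lt (h : T.anc u v) (huv : u ≠ v) :
    {w | T.anc w u}.ncard < {w | T.anc w v}.ncard := by
  refine Set.ncard_lt_ncard ⟨fun w hw => T.trans _ _ _ hw h, fun hsub => huv ?_⟩ (Set.toFinite _)
  exact T.antisymm _ _ h (hsub (T.refl v))

theorem exists_list_not_isLeaf (hG : ∀ u v, G.Adj u v ↔ s u ≠ s v) (T : SearchTree G) :
    ∃ l : List V, l.Nodup ∧ (∀ v, v ∈ l ↔ ¬T.IsLeaf v) ∧ l.Pairwise T.anc := by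
  classical
  let depth v := {w | T.anc w v}.ncard
  set l := (Finset.univ.filter fun v => ¬T.IsLeaf v).toList.mergeSort
    fun a b => decide (depth a ≤ depth b)
  have hperm : l ~ _ := mergeSort_perm _ _
  have hmem (v : V) : v ∈ l ↔ ¬T.IsLeaf v := by simp [hperm.mem_iff]
  refine ⟨l, hperm.nodup_iff.2 (Finset.nodup_toList _), hmem, ?_⟩
  refine (pairwise_mergeSort (fun a b c hab hbc => by simp only [decide_eq_true_eq] at *; omega)
    (fun a b => by simp only [Bool.or_eq_true, decide_eq_true_eq]; omega) _).imp_of_mem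
    fun {a b} ha _ hab => ?_
  rcases anc_total_of_not_isLeaf hG ((hmem a).1 ha) b with h | h
  · exact h
  · by_cases hba : b = a
    · exact hba ▸ T.refl b
    · have := ncard_anc_lt h hba
      simp only [depth, decide_eq_true_eq] at hab
      omega

end Leaves

variable {V : Type} [DecidableEq V] {G : SimpleGraph V} {s : V → Bool} {T : SearchTree G}
  {L L' L'' A B U P : List V} {a b u v w x z : V}

/-- The ancestor relation of the search tree with spine `L`: the vertices of `L` form a path
in list order, and every vertex off `L` is a leaf below all of them. -/
def anc (L : List V) (u v : V) : Prop :=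
  u = v ∨ (u ∈ L ∧ L.idxOf u < L.idxOf v)

instance (L : List V) : DecidableRel (anc L) := fun _ _ => by unfold anc; infer_instance

theorem anc_refl (L : List V) (v : V) : anc L v v := Or.inl rfl

theorem anc_of_notMem (hv : v ∉ L) : anc L v w ↔ v = w := by
  simp [anc, hv]

theorem anc_of_mem_of_notMem (hv : v ∈ L) (hw : w ∉ L) : anc L v w :=
  Or.inr ⟨hv, by rw [idxOf_eq_length hw]; exact idxOf_lt_length_of_mem hv⟩

theorem anc_antisymm (h₁ : anc L u v) (h₂ : anc L v u) : u = v := by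
  rcases h₁ with rfl | ⟨-, h₁⟩
  · rfl
  rcases h₂ with rfl | ⟨-, h₂⟩
  · rfl
  omega

theorem anc_trans (h₁ : anc L u v) (h₂ : anc L v w) : anc L u w := by
  rcases h₁ with rfl | ⟨hu, h₁⟩
  · exact h₂
  rcases h₂ with rfl | ⟨-, h₂⟩
  · exact Or.inr ⟨hu, h₁⟩
  · exact Or.inr ⟨hu, h₁.trans h₂⟩

theorem anc_total_of_mem (hu : u ∈ L) : anc L u v ∨ anc L v u := by
  rcases lt_trichotomy (L.idxOf u) (L.idxOf v) with h | h | h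
  · exact Or.inl (Or.inr ⟨hu, h⟩)
  · exact Or.inl (Or.inl ((idxOf_inj hu).1 h ▸ rfl))
  · have hv : v ∈ L := idxOf_lt_length_iff.1 (h.trans (idxOf_lt_length_of_mem hu))
    exact Or.inr (Or.inr ⟨hv, h⟩)

theorem anc_chain (h₁ : anc L u w) (h₂ : anc L v w) : anc L u v ∨ anc L v u := by
  rcases h₁ with rfl | ⟨hu, -⟩
  · exact Or.inr h₂
  · exact anc_total_of_mem hu

theorem anc_cons_self (B : List V) (v w : V) : anc (v :: B) v w := by
  by_cases h : v = w
  · exact Or.inl h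
  · exact Or.inr ⟨mem_cons_self, by rw [idxOf_cons_ne B h, idxOf_cons_self]; omega⟩

theorem anc_append_of_mem (hv : v ∈ A) : anc (A ++ B) v w ↔ anc A v w := by
  have hlt := idxOf_lt_length_of_mem hv
  by_cases hw : w ∈ A
  · simp [anc, hv, idxOf_append, hw]
  · simp [anc, hv, idxOf_append, hw]
    omega

theorem anc_append_of_notMem (hvA : v ∉ A) (hvB : v ∈ B) :
    anc (A ++ B) v w ↔ w ∉ A ∧ anc B v w := by
  by_cases hw : w ∈ A
  · simp only [anc, mem_append, hvB, hw, idxOf_append, hvA]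
    have := idxOf_lt_length_of_mem hw
    grind
  · simp [anc, hvB, hw, idxOf_append, hvA]

theorem anc_append_cons (hv : v ∉ A) : anc (A ++ v :: B) v = (· ∉ A) := by
  ext w
  simp [anc_append_of_notMem hv mem_cons_self, anc_cons_self]

theorem anc_append_append_eq {M M' : List V} (hM : v ∉ M) (hM' : v ∉ M')
    (hB : v ∈ B → ∀ w, w ∈ M ↔ w ∈ M') : anc (A ++ M ++ B) v = anc (A ++ M' ++ B) v := by
  ext w
  by_cases hvA : v ∈ A
  · simp only [append_assoc, anc_append_of_mem hvA]
  by_cases hvB : v ∈ B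
  · rw [anc_append_of_notMem (by simp [hvA, hM]) hvB,
      anc_append_of_notMem (by simp [hvA, hM']) hvB]
    simp [hB hvB]
  · rw [anc_of_notMem (by simp [hvA, hM, hvB]), anc_of_notMem (by simp [hvA, hM', hvB])]

theorem IsSpine.exists_anc_color_ne (h : IsSpine s L) (hv : v ∈ L) :
    ∃ a b, anc L v a ∧ anc L v b ∧ s a ≠ s b := by
  obtain ⟨A, z, rfl, hc⟩ := h.exists_eq_append
  obtain ⟨w, hw⟩ := h.exists_notMem
  refine ⟨w, z, anc_of_mem_of_notMem hv hw, ?_, hc w hw⟩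
  have hz : z ∉ A := notMem_of_nodup_append_cons h.nodup
  rcases mem_append.1 hv with hvA | hvz
  · exact (anc_append_of_mem hvA).2 (anc_of_mem_of_notMem hvA hz)
  · rw [mem_singleton.1 hvz]; exact anc_refl _ _

def toSearchTree (hG : ∀ u v, G.Adj u v ↔ s u ≠ s v) (h : IsSpine s L) : SearchTree G where
  anc := anc L
  refl := anc_refl L
  antisymm _ _ := anc_antisymm
  trans _ _ _ := anc_trans
  chain _ _ _ := anc_chain
  root := by
    obtain ⟨r, t, rfl⟩ := List.exists_cons_of_ne_nil h.ne_nil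
    exact ⟨r, anc_cons_self t r⟩
  edge_comparable u v huv := by
    by_cases hu : u ∈ L
    · exact anc_total_of_mem hu
    by_cases hv : v ∈ L
    · exact (anc_total_of_mem hv).symm
    · exact absurd (h.color_eq_of_notMem hu hv) ((hG u v).1 huv)
  desc_connected v := by
    by_cases hv : v ∈ L
    · obtain ⟨a, b, ha, hb, hab⟩ := h.exists_anc_color_ne hv
      exact connected_induce_of_color_ne hG ha hb hab
    · have : {u | anc L v u} = {v} := by ext; simp [anc_of_notMem hv, eq_comm]
      rw [this]
      exact SimpleGraph.Connected.of_subsingleton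

/-- The counterpart of `IsRotation` for the trees with spines `L` and `L'`. -/
structure Rotation (L L' : List V) (a b : V) : Prop where
  ne : a ≠ b
  anc_left : anc L a b
  anc_right : anc L' b = anc L a
  anc_of_ne : ∀ v, v ≠ a → v ≠ b → anc L' v = anc L v

theorem Rotation.isRotation (h : Rotation L L' a b) {T T' : SearchTree G} (hT : T.anc = anc L)
    (hT' : T'.anc = anc L') : IsRotation T T' a b := by
  unfold IsRotation
  refine ⟨h.ne, by rw [hT]; exact h.anc_left, ?_, fun v hva hvb => ?_⟩
  · change {w | T'.anc b w} = {w | T.anc a w}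
    rw [hT, hT', h.anc_right]
  · change {w | T'.anc v w} = {w | T.anc v w}
    rw [hT, hT', h.anc_of_ne v hva hvb]

def DistLE (G : SimpleGraph V) (L L' : List V) (n : ℕ) : Prop :=
  ∀ T T' : SearchTree G, T.anc = anc L → T'.anc = anc L' → (rotationGraph G).edist T T' ≤ n

theorem DistLE.refl (G : SimpleGraph V) (L : List V) : DistLE G L L 0 := by
  intro T T' hT hT'
  rw [SearchTree.ext_anc (hT.trans hT'.symm), SimpleGraph.edist_self]
  rfl

theorem DistLE.mono {m n : ℕ} (h : DistLE G L L' m) (hmn : m ≤ n) : DistLE G L L' n :=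
  fun T T' hT hT' => (h T T' hT hT').trans (by exact_mod_cast hmn)

theorem DistLE.symm {n : ℕ} (h : DistLE G L L' n) : DistLE G L' L n :=
  fun T T' hT hT' => SimpleGraph.edist_comm.trans_le (h T' T hT' hT)

theorem DistLE.trans (hG : ∀ u v, G.Adj u v ↔ s u ≠ s v) (hL' : IsSpine s L') {m n : ℕ}
    (h₁ : DistLE G L L' m) (h₂ : DistLE G L' L'' n) : DistLE G L L'' (m + n) := by
  intro T T'' hT hT''
  calc (rotationGraph G).edist T T''
      ≤ (rotationGraph G).edist T (toSearchTree hG hL') +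
        (rotationGraph G).edist (toSearchTree hG hL') T'' := SimpleGraph.edist_triangle
    _ ≤ m + n := add_le_add (h₁ _ _ hT rfl) (h₂ _ _ rfl hT'')
    _ = (m + n : ℕ) := by push_cast; rfl

theorem Rotation.distLE (h : Rotation L L' a b) : DistLE G L L' 1 := by
  intro T T' hT hT'
  have hadj : (rotationGraph G).Adj T T' := ⟨a, b, h.isRotation hT hT'⟩
  exact (SimpleGraph.edist_eq_one_iff_adj.2 hadj).le

theorem Rotation.distLE_trans (h : Rotation L L' a b) (hG : ∀ u v, G.Adj u v ↔ s u ≠ s v)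
    (hL' : IsSpine s L') {n : ℕ} (h' : DistLE G L' L'' n) : DistLE G L L'' (n + 1) :=
  add_comm 1 n ▸ h.distLE.trans hG hL' h'

theorem Rotation.of_append_cons {M M' : List V} (hab : a ≠ b) (ha : a ∉ A) (hb : b ∉ A)
    (h : ∀ v, v ≠ a → v ≠ b → anc (A ++ b :: M') v = anc (A ++ a :: M) v) :
    Rotation (A ++ a :: M) (A ++ b :: M') a b :=
  ⟨hab, by simp [anc_append_cons ha, hb], by rw [anc_append_cons hb, anc_append_cons ha], h⟩

theorem rotation_swap (hnd : (A ++ u :: x :: B).Nodup) :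
    Rotation (A ++ u :: x :: B) (A ++ x :: u :: B) u x := by
  have hx : x ∉ A ∧ x ≠ u := by
    simpa using notMem_of_nodup_append_cons (A := A ++ [u]) (by simpa using hnd)
  refine .of_append_cons hx.2.symm (notMem_of_nodup_append_cons hnd) hx.1 fun v hvu hvx => ?_
  rw [show A ++ u :: x :: B = A ++ [u, x] ++ B by simp,
    show A ++ x :: u :: B = A ++ [x, u] ++ B by simp]
  exact anc_append_append_eq (by simp [hvu, hvx]) (by simp [hvu, hvx]) fun _ w => by simp [or_comm]

theorem rotation_demote (hnd : (A ++ [u, x]).Nodup) : Rotation (A ++ [u, x]) (A ++ [x]) u x := by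
  have hx : x ∉ A ∧ x ≠ u := by
    simpa using notMem_of_nodup_append_cons (A := A ++ [u]) (by simpa using hnd)
  refine .of_append_cons hx.2.symm (notMem_of_nodup_append_cons hnd) hx.1 fun v hvu hvx => ?_
  rw [show A ++ [u, x] = A ++ [u] ++ [x] by simp, show A ++ [x] = A ++ [] ++ [x] by simp]
  exact anc_append_append_eq (by simp) (by simpa using hvu) fun h => absurd (mem_singleton.1 h) hvx

theorem rotation_promote (hnd : (A ++ [u]).Nodup) (hx : x ∉ A ++ [u]) :
    Rotation (A ++ [u]) (A ++ [x, u]) u x := by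
  simp only [mem_append, mem_singleton, not_or] at hx
  refine .of_append_cons (Ne.symm hx.2) (notMem_of_nodup_append_cons hnd) hx.1
    fun v hvu hvx => ?_
  rw [show A ++ [u] = A ++ [] ++ [u] by simp, show A ++ [x, u] = A ++ [x] ++ [u] by simp]
  exact (anc_append_append_eq (by simp) (by simpa using hvx) fun h =>
    absurd (mem_singleton.1 h) hvu).symm

theorem rotation_exchange (hnd : (A ++ [u]).Nodup) (hx : x ∉ A ++ [u]) :
    Rotation (A ++ [u]) (A ++ [x]) u x := by
  simp only [mem_append, mem_singleton, not_or] at hx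
  refine .of_append_cons (Ne.symm hx.2) (notMem_of_nodup_append_cons hnd) hx.1
    fun v hvu hvx => ?_
  rw [show A ++ [u] = A ++ [u] ++ [] by simp, show A ++ [x] = A ++ [x] ++ [] by simp]
  exact (anc_append_append_eq (by simpa using hvu) (by simpa using hvx) fun h =>
    absurd h (not_mem_nil)).symm

theorem IsSpine.exists_rotation {c : Bool} (h : IsSpine s L) (hL : ∃ u ∈ L, s u ≠ c) :
    ∃ L' a b, IsSpine s L' ∧ Rotation L L' a b ∧ s a = !c ∧ s b = c := by
  obtain ⟨A, u, X, rfl, hu, hX⟩ := exists_eq_append_cons_of_exists hL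
  replace hu : s u = !c := Bool.eq_not_iff.2 hu
  rcases X with _ | ⟨x, _ | ⟨y, X⟩⟩
  · obtain ⟨f, hf⟩ := h.exists_notMem
    have hcol : ∀ w ∉ A ++ [u], s w = c := fun w hw => by
      simpa [hu] using (isSpine_append_singleton.1 h).2.2 w hw
    by_cases hg : ∃ g ∉ A ++ [u], g ≠ f
    · obtain ⟨g, hg, hgf⟩ := hg
      exact ⟨_, u, f, h.promote hf hg hgf.symm, rotation_promote h.nodup hf, hu, hcol f hf⟩
    · push Not at hg
      exact ⟨_, u, f, h.exchange fun w => ⟨hg w, by rintro rfl; exact hf⟩,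
        rotation_exchange h.nodup hf, hu, hcol f hf⟩
  · exact ⟨_, u, x, h.demote (by simp [hu, hX]), rotation_demote h.nodup, hu, hX x (by simp)⟩
  · exact ⟨_, u, x, h.swap (cons_ne_nil y X), rotation_swap h.nodup, hu, hX x (by simp)⟩

theorem distLE_bubble (hG : ∀ u v, G.Adj u v ↔ s u ≠ s v) {t : V} :
    ∀ (W : List V) {Y : List V}, Y ≠ [] → IsSpine s (U ++ W ++ t :: Y) →
      IsSpine s (U ++ t :: (W ++ Y)) ∧
        DistLE G (U ++ W ++ t :: Y) (U ++ t :: (W ++ Y)) W.length := by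
  intro W
  induction W using List.reverseRecOn with
  | nil =>
    intro Y _ h
    simp only [append_nil, nil_append, length_nil] at h ⊢
    exact ⟨h, DistLE.refl G _⟩
  | append_singleton W x ih =>
    intro Y hY h
    rw [show U ++ (W ++ [x]) ++ t :: Y = U ++ W ++ x :: t :: Y by simp] at h ⊢
    have h₁ := h.swap hY
    obtain ⟨h', hd⟩ := ih (cons_ne_nil x Y) h₁
    rw [append_assoc W, singleton_append, length_append, length_singleton]
    exact ⟨h', (rotation_swap h.nodup).distLE_trans hG h₁ hd⟩

theorem distLE_raise (hG : ∀ u v, G.Adj u v ↔ s u ≠ s v) {t t' : V} (h : IsSpine s (U ++ P))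
    (hP : P ≠ []) (ht : t ∉ U ++ P) (ht' : t' ∉ U ++ P) (htt' : t ≠ t') :
    IsSpine s (U ++ t :: P) ∧ DistLE G (U ++ P) (U ++ t :: P) P.length := by
  obtain ⟨W, x, rfl⟩ : ∃ W x, P = W ++ [x] := ⟨_, _, (dropLast_append_getLast hP).symm⟩
  rw [← append_assoc] at h ht ht' ⊢
  have h₁ := h.promote ht ht' htt'
  rw [show U ++ W ++ [t, x] = U ++ W ++ t :: [x] by simp] at h₁
  obtain ⟨h', hd⟩ := distLE_bubble hG W (cons_ne_nil x []) h₁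
  exact ⟨h', by simpa using (rotation_promote h.nodup ht).distLE_trans hG h₁ hd⟩

theorem distLE_demote_all (hG : ∀ u v, G.Adj u v ↔ s u ≠ s v) {q : V} :
    ∀ W : List V, IsSpine s (U ++ W ++ [q]) → (∀ w ∈ W, s w ≠ s q) →
      DistLE G (U ++ W ++ [q]) (U ++ [q]) W.length := by
  intro W
  induction W using List.reverseRecOn with
  | nil => intro _ _; simpa using DistLE.refl G _
  | append_singleton W w ih =>
    intro h hW
    rw [show U ++ (W ++ [w]) ++ [q] = U ++ W ++ [w, q] by simp] at h ⊢
    have h₁ := h.demote (hW w (by simp))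
    have hd := ih h₁ fun x hx => hW x (by simp [hx])
    simpa using (rotation_demote h.nodup).distLE_trans hG h₁ hd

theorem distLE_last (hG : ∀ u v, G.Adj u v ↔ s u ≠ s v) {q : V} (h : IsSpine s (U ++ P))
    (hP : P ≠ []) (hq : ∀ w, w ∉ U ++ P ↔ w = q) (hPq : ∀ x ∈ P, s x ≠ s q) :
    DistLE G (U ++ P) (U ++ [q]) P.length := by
  obtain ⟨W, x, rfl⟩ : ∃ W x, P = W ++ [x] := ⟨_, _, (dropLast_append_getLast hP).symm⟩
  rw [← append_assoc] at h hq ⊢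
  have h₁ := h.exchange hq
  have hd := distLE_demote_all hG W h₁ fun w hw => hPq w (by simp [hw])
  simpa using (rotation_exchange h.nodup ((hq q).2 rfl)).distLE_trans hG h₁ hd

/-- Starting from a spine `U ++ P` whose leaves are the vertices of `R`, insert the vertices of
`R` one by one below `U`, each one moved up across the block `P`. -/
theorem distLE_append (hG : ∀ u v, G.Adj u v ↔ s u ≠ s v) (hP : P ≠ []) :
    ∀ (R U : List V), IsSpine s (U ++ P) → R.Nodup → (∀ w, w ∉ U ++ P ↔ w ∈ R) →
      (∀ x ∈ P, ∀ t ∈ R, s x ≠ s t) → DistLE G (U ++ P) (U ++ R) (R.length * P.length)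
  | [], _, h, _, hR, _ => by
    obtain ⟨w, hw⟩ := h.exists_notMem
    exact absurd ((hR w).1 hw) (not_mem_nil)
  | [q], U, h, _, hR, hPR =>
    by simpa using distLE_last hG h hP (by simpa using hR) fun x hx => hPR x hx q (by simp)
  | t :: t' :: R, U, h, hnd, hR, hPR => by
    have htt' : t ≠ t' := fun e => (nodup_cons.1 hnd).1 (by simp [e])
    obtain ⟨h₁, hd₁⟩ := distLE_raise hG h hP ((hR t).2 (by simp)) ((hR t').2 (by simp)) htt'
    rw [← singleton_append, ← append_assoc] at h₁ hd₁
    have hR' (w : V) : w ∉ U ++ [t] ++ P ↔ w ∈ t' :: R := by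
      have := hR w
      simp only [nodup_cons, mem_cons, mem_append] at hnd this ⊢
      grind
    have hd₂ := distLE_append hG hP (t' :: R) (U ++ [t]) h₁ (nodup_cons.1 hnd).2 hR'
      fun x hx y hy => hPR x hx y (mem_cons_of_mem t hy)
    have hd := hd₁.trans hG h₁ hd₂
    rw [append_assoc, singleton_append] at hd
    exact hd.mono (le_of_eq (by simp only [length_cons]; ring))

theorem anc_eq_of_pairwise (hG : ∀ u v, G.Adj u v ↔ s u ≠ s v) {l : List V} (hnd : l.Nodup)
    (hl : ∀ v, v ∈ l ↔ ¬T.IsLeaf v) (hpw : l.Pairwise T.anc) : T.anc = anc l := by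
  ext u w
  by_cases hu : u ∈ l
  · obtain ⟨A, B, rfl⟩ := append_of_mem hu
    have huA : u ∉ A := notMem_of_nodup_append_cons hnd
    rw [anc_append_cons huA]
    obtain ⟨-, hpwB, hpwAB⟩ := pairwise_append.1 hpw
    refine ⟨fun h hwA => huA (T.antisymm _ _ h (hpwAB w hwA u (by simp)) ▸ hwA), fun hwA => ?_⟩
    by_cases hw : w ∈ A ++ u :: B
    · rcases mem_cons.1 ((mem_append.1 hw).resolve_left hwA) with rfl | hwB
      exacts [T.refl w, rel_of_pairwise_cons hpwB hwB]
    · exact anc_of_isLeaf hG ((hl u).1 hu) (not_not.1 ((hl w).not.1 hw))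
  · have hu' := not_not.1 ((hl u).not.1 hu)
    rw [anc_of_notMem hu]
    exact ⟨fun h => (hu' w h).symm, fun h => h ▸ T.refl u⟩

section

open Finset

variable [Fintype V]

def inversions (s : V → Bool) (c : Bool) (L : List V) : ℕ :=
  #{p ∈ univ.filter (s · = !c) ×ˢ univ.filter (s · = c) | anc L p.1 p.2}

/-- A rotation at an edge from `a` to `b` only shrinks the descendants of `a`, and removes `b`
from them. -/
theorem Rotation.inversions_lt {c : Bool} (h : Rotation L L' a b) (ha : s a = !c)
    (hb : s b = c) : inversions s c L' < inversions s c L := by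
  have hba : anc L' b a := h.anc_right ▸ anc_refl L a
  refine card_lt_card ((ssubset_iff_of_subset fun p hp => ?_).2 ⟨(a, b), ?_, ?_⟩)
  · simp only [Finset.mem_filter, Finset.mem_product, mem_univ, true_and] at hp ⊢
    refine ⟨hp.1, ?_⟩
    obtain ⟨⟨hp1, hp2⟩, hanc⟩ := hp
    by_cases hpa : p.1 = a
    · rw [hpa] at hanc ⊢
      rw [← h.anc_right]
      exact anc_trans hba hanc
    · have hpb : p.1 ≠ b := fun hpb => by simp_all
      rwa [← h.anc_of_ne _ hpa hpb]
  · simp [ha, hb, h.anc_left]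
  · simp only [Finset.mem_filter, not_and]
    exact fun _ hab => h.ne (anc_antisymm hab hba)

theorem inversions_add_inversions_not (h : IsSpine s L) (c : Bool) :
    inversions s c L + inversions s (!c) L = #{v | s v = !c} * #{v | s v = c} := by
  set S := univ.filter (s · = !c) ×ˢ univ.filter (s · = c)
  have hswap : inversions s (!c) L = #{p ∈ S | anc L p.2 p.1} := by
    refine card_nbij' Prod.swap Prod.swap ?_ ?_ (fun _ _ => rfl) (fun _ _ => rfl) <;>
      · intro p
        simp only [S, coe_filter, Finset.mem_filter, Finset.mem_product, mem_univ, true_and,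
          Bool.not_not, Prod.fst_swap, Prod.snd_swap, Set.mem_ofPred_eq]
        tauto
  -- two vertices of different colors are comparable, not both being leaves
  have hcompl : {p ∈ S | anc L p.2 p.1} = {p ∈ S | ¬ anc L p.1 p.2} := by
    refine filter_congr fun p hp => ?_
    simp only [S, Finset.mem_product, Finset.mem_filter, mem_univ, true_and] at hp
    have hne : p.1 ≠ p.2 := fun h => by rw [h, hp.2] at hp; simp at hp
    constructor
    · exact fun h₂ h₁ => hne (anc_antisymm h₁ h₂)
    · intro h₁
      by_cases hp₁ : p.1 ∈ L
      · exact (anc_total_of_mem hp₁).resolve_left h₁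
      by_cases hp₂ : p.2 ∈ L
      · exact ((anc_total_of_mem hp₂).resolve_right h₁)
      · exact absurd (h.color_eq_of_notMem hp₁ hp₂) (by simp [hp.1, hp.2])
  rw [hswap, hcompl, inversions, card_filter_add_card_filter_not, card_product]

theorem exists_monochromatic_distLE (hG : ∀ u v, G.Adj u v ↔ s u ≠ s v) (c : Bool)
    (h : IsSpine s L) :
    ∃ L', IsSpine s L' ∧ (∀ v, v ∈ L' ↔ s v = c) ∧ DistLE G L L' (inversions s c L) := by
  induction hn : inversions s c L using Nat.strong_induction_on generalizing L with
  | _ n ih =>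
  by_cases hL : ∃ u ∈ L, s u ≠ c
  · obtain ⟨L₁, a, b, h₁, hrot, ha, hb⟩ := h.exists_rotation hL
    have hlt := hrot.inversions_lt ha hb
    obtain ⟨L', h', hmem, hd⟩ := ih _ (hn ▸ hlt) h₁ rfl
    exact ⟨L', h', hmem, (hrot.distLE_trans hG h₁ hd).mono (by omega)⟩
  · push Not at hL
    exact ⟨L, h, h.mem_iff_of_forall hL, (DistLE.refl G L).mono (Nat.zero_le n)⟩

theorem length_eq_card_filter {L : List V} {p : V → Prop} [DecidablePred p] (hnd : L.Nodup)
    (hL : ∀ v, v ∈ L ↔ p v) : L.length = #{v | p v} := by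
  rw [← List.toFinset_card_of_nodup hnd]
  congr 1
  ext v
  simp [hL]

/-- Move to the spine of the vertices of color `c`, then to that of the vertices of color `!c`,
then to `L₂`. -/
theorem distLE_of_isSpine (hG : ∀ u v, G.Adj u v ↔ s u ≠ s v) (c : Bool) (h₁ : IsSpine s L₁)
    (h₂ : IsSpine s L₂) : DistLE G L₁ L₂
      (inversions s c L₁ + #{v | s v = !c} * #{v | s v = c} + inversions s (!c) L₂) := by
  obtain ⟨P, hP, hPc, hd₁⟩ := exists_monochromatic_distLE hG c h₁
  obtain ⟨R, hR, hRc, hd₃⟩ := exists_monochromatic_distLE hG (!c) h₂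
  have hd₂ := distLE_append hG hP.ne_nil R [] (by simpa using hP) hR.nodup
    (fun w => by simp [hPc, hRc, Bool.eq_not_iff])
    fun x hx t ht => by simp [(hPc x).1 hx, (hRc t).1 ht]
  rw [nil_append, nil_append, length_eq_card_filter hP.nodup hPc,
    length_eq_card_filter hR.nodup hRc] at hd₂
  exact (hd₁.trans hG hP hd₂).trans hG hR hd₃.symm

/-- Every search tree has a spine: its inner vertices. -/
theorem exists_isSpine (hG : ∀ u v, G.Adj u v ↔ s u ≠ s v) (hs : ∃ u v, s u ≠ s v)
    (T : SearchTree G) : ∃ L, IsSpine s L ∧ T.anc = anc L := by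
  obtain ⟨l, hnd, hl, hpw⟩ := exists_list_not_isLeaf hG T
  have hanc := anc_eq_of_pairwise hG hnd hl hpw
  have hne : l ≠ [] := by
    obtain ⟨r, hr⟩ := T.root
    obtain ⟨u, v, huv⟩ := hs
    refine ne_nil_of_mem ((hl r).2 fun hleaf => huv ?_)
    rw [hleaf u (hr u), hleaf v (hr v)]
  obtain ⟨A, z, rfl⟩ : ∃ A z, l = A ++ [z] := ⟨_, _, (dropLast_append_getLast hne).symm⟩
  have hz : ¬T.IsLeaf z := (hl z).1 (by simp)
  obtain ⟨a, hza, haz⟩ := exists_anc_color_ne hG hz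
  have ha : a ∉ A ++ [z] := by
    have hzA : z ∉ A := notMem_of_nodup_append_cons hnd
    rw [hanc, anc_append_cons hzA] at hza
    simpa [hza] using fun h : a = z => haz (by rw [h])
  refine ⟨A ++ [z], isSpine_append_singleton.2 ⟨hnd, ⟨a, ha⟩, fun w hw => ?_⟩, hanc⟩
  rw [color_eq_of_isLeaf hG (not_not.1 ((hl w).not.1 hw)) (not_not.1 ((hl a).not.1 ha))]
  exact haz

/-- The bounds through the spines of either color add up to `4pq`. -/
theorem edist_le (hG : ∀ u v, G.Adj u v ↔ s u ≠ s v) (hs : ∃ u v, s u ≠ s v)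
    (T₁ T₂ : SearchTree G) :
    (rotationGraph G).edist T₁ T₂ ≤ (2 * #{v | s v = false} * #{v | s v = true} : ℕ) := by
  obtain ⟨L₁, h₁, hT₁⟩ := exists_isSpine hG hs T₁
  obtain ⟨L₂, h₂, hT₂⟩ := exists_isSpine hG hs T₂
  have hf := distLE_of_isSpine hG false h₁ h₂ T₁ T₂ hT₁ hT₂
  have ht := distLE_of_isSpine hG true h₁ h₂ T₁ T₂ hT₁ hT₂
  have e₁ := inversions_add_inversions_not h₁ false
  have e₂ := inversions_add_inversions_not h₂ false
  simp only [Bool.not_false, Bool.not_true] at hf ht e₁ e₂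
  rw [mul_comm #{v | s v = false}] at ht
  rw [mul_assoc, mul_comm #{v | s v = false}]
  generalize #{v | s v = true} * #{v | s v = false} = N at hf ht e₁ e₂ ⊢
  by_cases hcase : inversions s false L₁ + inversions s true L₂ ≤ N
  · exact hf.trans (Nat.cast_le.2 (by omega))
  · exact ht.trans (Nat.cast_le.2 (by omega))

end

end Spine

/-- For all positive integers `p, q` and any two search trees
`T1, T2` on the complete bipartite graph `K_{p,q}`, `dist(T1, T2) ≤ 2pq`. -/
theorem kpq_dist_upper (p q : ℕ) (hp : 0 < p) (hq : 0 < q)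
    (T1 T2 : SearchTree (completeBipartiteGraph (Fin p) (Fin q))) :
    (rotationGraph (completeBipartiteGraph (Fin p) (Fin q))).edist T1 T2 ≤
      ((2 * p * q : ℕ) : ℕ∞) := by
  have hG (u v : Fin p ⊕ Fin q) :
      (completeBipartiteGraph (Fin p) (Fin q)).Adj u v ↔ u.isRight ≠ v.isRight := by
    cases u <;> cases v <;> simp
  have hs : ∃ u v : Fin p ⊕ Fin q, u.isRight ≠ v.isRight := ⟨.inl ⟨0, hp⟩, .inr ⟨0, hq⟩, by simp⟩
  have hP : Finset.card {v : Fin p ⊕ Fin q | v.isRight = false} = p := by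
    rw [show ({v | v.isRight = false} : Finset _) = Finset.univ.map .inl by ext (v | v) <;> simp]
    simp
  have hQ : Finset.card {v : Fin p ⊕ Fin q | v.isRight = true} = q := by
    rw [show ({v | v.isRight = true} : Finset _) = Finset.univ.map .inr by ext (v | v) <;> simp]
    simp
  simpa only [hP, hQ] using Spine.edist_le hG hs T1 T2
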